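/- arXiv:2411.01026 — 4 statements merged into one kernel-verified Lean document; each statement's English description precedes it below -/
import Mathlib

section
/- For 1 < q < ∞, 1 < r ≤ q, and any two Lebesgue-measurable positive functions u, v on a domain Ω, the following pointwise inequality holds for a.e. x, y ∈ Ω: [u(x)-u(y)]^{q-1} ( (u(x)^r - v(x)^r)/u(x)^{r-1} - (u(y)^r - v(y)^r)/u(y)^{r-1} ) + [v(x)-v(y)]^{q-1} ( (v(x)^r - u(x)^r)/v(x)^{r-1} - (v(y)^r - u(y)^r)/v(y)^{r-1} ) ≥ 0, where [t]^{q-1} := |t|^{q-2} t. -/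
/-!
Write `a, b, c, d` for `u x, u y, v x, v y`. Since `a ^ r / a ^ (r - 1) = a`, the first summand is
`|a - b| ^ q - [a - b]^{q-1} (c ^ r / a ^ (r - 1) - d ^ r / b ^ (r - 1))`, and symmetrically for the
second. Convexity of the perspective `(a, c) ↦ c ^ r / a ^ (r - 1)` together with Young's inequality
gives the discrete Picone inequality of Brasco–Franzina,
`(a - b) ^ (r - 1) (c ^ r / a ^ (r - 1) - d ^ r / b ^ (r - 1)) ≤ |c - d| ^ r` for `b < a`, which
bounds the subtracted terms by `|a - b| ^ (q - r) |c - d| ^ r` and `|c - d| ^ (q - r) |a - b| ^ r`.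
Their sum is at most `|a - b| ^ q + |c - d| ^ q`, because
`m ^ q + n ^ q - m ^ (q - r) n ^ r - n ^ (q - r) m ^ r = (m ^ (q - r) - n ^ (q - r)) (m ^ r - n ^ r)`
is nonnegative for `m, n ≥ 0` and `0 ≤ r ≤ q`.
-/

open MeasureTheory

noncomputable section

/-- For `t ∈ ℝ`, `[t]^{q-1} := |t|^{q-2} t`. -/
def sgnPow (q t : ℝ) : ℝ := |t| ^ (q - 2) * t

namespace Real

theorem mul_rpow_sub_one_mul_le {r : ℝ} (hr : 1 < r) {A B : ℝ} (hA : 0 ≤ A) (hB : 0 ≤ B) :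
    r * A ^ (r - 1) * B ≤ (r - 1) * A ^ r + B ^ r := by
  have hr0 : 0 < r - 1 := by linarith
  have young := young_inequality_of_nonneg (rpow_nonneg hA (r - 1)) hB
    (HolderConjugate.conjExponent hr).symm
  rw [conjExponent, ← rpow_mul hA, mul_div_cancel₀ _ hr0.ne'] at young
  have := mul_le_mul_of_nonneg_left young (by linarith : 0 ≤ r)
  field_simp at this ⊢
  linarith

theorem rpow_div_rpow_sub_one {r a c : ℝ} (ha : 0 < a) (hc : 0 ≤ c) :
    c ^ r / a ^ (r - 1) = a * (c / a) ^ r := by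
  rw [div_rpow hc ha.le, rpow_sub_one ha.ne']
  field_simp

theorem rpow_sub_one_mul_self {x r : ℝ} (hx : 0 ≤ x) (hr : 1 ≤ r) : x ^ (r - 1) * x = x ^ r := by
  have := rpow_add_of_nonneg hx (sub_nonneg.2 hr) zero_le_one
  rwa [sub_add_cancel, rpow_one, eq_comm] at this

/-- `(a, c) ↦ c ^ r / a ^ (r - 1) = a * (c / a) ^ r` is the perspective of `x ↦ x ^ r`; this is its
gradient inequality at `(a, c)`, which reduces to the tangent line of `x ^ r` at `c / a`. -/
theorem rpow_div_rpow_sub_one_sub_le {r a b c d : ℝ} (hr : 1 < r) (ha : 0 < a) (hb : 0 < b)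
    (hc : 0 ≤ c) (hd : 0 ≤ d) :
    c ^ r / a ^ (r - 1) - d ^ r / b ^ (r - 1) ≤
      (1 - r) * (c / a) ^ r * (a - b) + r * (c / a) ^ (r - 1) * (c - d) := by
  rw [rpow_div_rpow_sub_one ha hc, rpow_div_rpow_sub_one hb hd]
  set t := c / a
  set s := d / b
  have hc' : c = a * t := (mul_div_cancel₀ c ha.ne').symm
  have hd' : d = b * s := (mul_div_cancel₀ d hb.ne').symm
  have ht : 0 ≤ t := by positivity
  have tangent := mul_le_mul_of_nonneg_left
    (mul_rpow_sub_one_mul_le hr ht (by positivity : 0 ≤ s)) hb.le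
  have := rpow_sub_one_mul_self ht hr.le
  rw [hc', hd']
  linear_combination tangent - r * a * this

theorem rpow_sub_one_mul_rpow_div_sub_le {r a b c d : ℝ} (hr : 1 < r) (hb : 0 < b) (hab : b < a)
    (hc : 0 ≤ c) (hd : 0 ≤ d) :
    (a - b) ^ (r - 1) * (c ^ r / a ^ (r - 1) - d ^ r / b ^ (r - 1)) ≤ |c - d| ^ r := by
  have ha : 0 < a := hb.trans hab
  have hab' : 0 ≤ a - b := by linarith
  have ht : 0 ≤ c / a := by positivity
  set X := c / a * (a - b)
  have hX : 0 ≤ X := by positivity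
  have hXr : X ^ r = (c / a) ^ r * (a - b) ^ (r - 1) * (a - b) := by
    rw [mul_assoc, rpow_sub_one_mul_self hab' hr.le, mul_rpow ht hab']
  have hXr1 : X ^ (r - 1) = (c / a) ^ (r - 1) * (a - b) ^ (r - 1) := mul_rpow ht hab'
  calc (a - b) ^ (r - 1) * (c ^ r / a ^ (r - 1) - d ^ r / b ^ (r - 1))
      ≤ (a - b) ^ (r - 1) * ((1 - r) * (c / a) ^ r * (a - b) + r * (c / a) ^ (r - 1) * (c - d)) :=
        mul_le_mul_of_nonneg_left (rpow_div_rpow_sub_one_sub_le hr ha hb hc hd)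
          (rpow_nonneg hab' _)
    _ = (1 - r) * X ^ r + r * X ^ (r - 1) * (c - d) := by rw [hXr, hXr1]; ring
    _ ≤ (1 - r) * X ^ r + r * X ^ (r - 1) * |c - d| := by
        gcongr
        exact le_abs_self _
    _ ≤ |c - d| ^ r := by linarith [mul_rpow_sub_one_mul_le hr hX (abs_nonneg (c - d))]

theorem rpow_mul_rpow_add_rpow_mul_rpow_le {q r m n : ℝ} (hr : 0 ≤ r) (hrq : r ≤ q)
    (hm : 0 ≤ m) (hn : 0 ≤ n) :
    m ^ (q - r) * n ^ r + n ^ (q - r) * m ^ r ≤ m ^ q + n ^ q := by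
  have hqr : 0 ≤ q - r := by linarith
  have split : ∀ x : ℝ, 0 ≤ x → x ^ q = x ^ (q - r) * x ^ r := fun x hx => by
    rw [← rpow_add_of_nonneg hx hqr hr, sub_add_cancel]
  have same_sign : 0 ≤ (m ^ (q - r) - n ^ (q - r)) * (m ^ r - n ^ r) := by
    rcases le_total m n with h | h
    · exact mul_nonneg_of_nonpos_of_nonpos (sub_nonpos.2 (rpow_le_rpow hm h hqr))
        (sub_nonpos.2 (rpow_le_rpow hm h hr))
    · exact mul_nonneg (sub_nonneg.2 (rpow_le_rpow hn h hqr))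
        (sub_nonneg.2 (rpow_le_rpow hn h hr))
  rw [split m hm, split n hn]
  linarith

end Real

open Real

theorem sgnPow_neg (q t : ℝ) : sgnPow q (-t) = -sgnPow q t := by
  simp [sgnPow]

theorem sgnPow_of_pos {q t : ℝ} (ht : 0 < t) : sgnPow q t = t ^ (q - 1) := by
  rw [sgnPow, abs_of_pos ht, ← rpow_add_one ht.ne']
  ring_nf

theorem sgnPow_mul_self {q : ℝ} (hq : q ≠ 0) (t : ℝ) : sgnPow q t * t = |t| ^ q := by
  rcases eq_or_ne t 0 with rfl | ht
  · simp [sgnPow, zero_rpow hq]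
  · rw [sgnPow, mul_assoc, ← abs_mul_abs_self, ← mul_assoc, ← rpow_add_one (abs_ne_zero.2 ht),
      ← rpow_add_one (abs_ne_zero.2 ht)]
    ring_nf

theorem sgnPow_sub_mul_rpow_div_sub_le_of_lt {q r a b c d : ℝ} (hr : 1 < r) (hb : 0 < b)
    (hab : b < a) (hc : 0 ≤ c) (hd : 0 ≤ d) :
    sgnPow q (a - b) * (c ^ r / a ^ (r - 1) - d ^ r / b ^ (r - 1)) ≤
      |a - b| ^ (q - r) * |c - d| ^ r := by
  have hab' : 0 < a - b := sub_pos.2 hab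
  rw [sgnPow_of_pos hab', abs_of_pos hab', show q - 1 = (q - r) + (r - 1) by ring,
    rpow_add hab', mul_assoc]
  exact mul_le_mul_of_nonneg_left (rpow_sub_one_mul_rpow_div_sub_le hr hb hab hc hd)
    (rpow_nonneg hab'.le _)

theorem sgnPow_sub_mul_rpow_div_sub_le {q r a b c d : ℝ} (hr : 1 < r) (ha : 0 < a) (hb : 0 < b)
    (hc : 0 ≤ c) (hd : 0 ≤ d) :
    sgnPow q (a - b) * (c ^ r / a ^ (r - 1) - d ^ r / b ^ (r - 1)) ≤
      |a - b| ^ (q - r) * |c - d| ^ r := by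
  rcases lt_trichotomy b a with hab | rfl | hab
  · exact sgnPow_sub_mul_rpow_div_sub_le_of_lt hr hb hab hc hd
  · simp only [sub_self, sgnPow, abs_zero, mul_zero, zero_mul]
    positivity
  · have := sgnPow_sub_mul_rpow_div_sub_le_of_lt (q := q) hr ha hab hd hc
    rw [← neg_sub a b, sgnPow_neg, abs_neg, abs_sub_comm d c] at this
    linarith

theorem discrete_picone_pointwise {q r a b c d : ℝ} (hr : 1 < r) (hrq : r ≤ q)
    (ha : 0 < a) (hb : 0 < b) (hc : 0 < c) (hd : 0 < d) :
    0 ≤ sgnPow q (a - b) * ((a ^ r - c ^ r) / a ^ (r - 1) - (b ^ r - d ^ r) / b ^ (r - 1)) +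
        sgnPow q (c - d) * ((c ^ r - a ^ r) / c ^ (r - 1) - (d ^ r - b ^ r) / d ^ (r - 1)) := by
  have split : ∀ x y : ℝ, 0 < x → (x ^ r - y ^ r) / x ^ (r - 1) = x - y ^ r / x ^ (r - 1) :=
    fun x y hx => by
      rw [sub_div, rpow_div_rpow_sub_one hx hx.le, div_self hx.ne', one_rpow, mul_one]
  have hq : q ≠ 0 := by linarith
  rw [split a c ha, split b d hb, split c a hc, split d b hd]
  linear_combination sgnPow_sub_mul_rpow_div_sub_le (q := q) hr ha hb hc.le hd.le +
    sgnPow_sub_mul_rpow_div_sub_le (q := q) hr hc hd ha.le hb.le +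
    rpow_mul_rpow_add_rpow_mul_rpow_le (by linarith) hrq (abs_nonneg (a - b)) (abs_nonneg (c - d)) -
    sgnPow_mul_self hq (a - b) - sgnPow_mul_self hq (c - d)

theorem discrete_picone_general {α : Type*} [MeasurableSpace α] (μ : Measure α) [SigmaFinite μ]
    (Ω : Set α) (q r : ℝ) (hr1 : 1 < r) (hrq : r ≤ q)
    (u v : α → ℝ) (hu : Measurable u) (hv : Measurable v)
    (hupos : ∀ x ∈ Ω, 0 < u x) (hvpos : ∀ x ∈ Ω, 0 < v x) :
    ∀ᵐ z ∂((μ.restrict Ω).prod (μ.restrict Ω)),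
      0 ≤ sgnPow q (u z.1 - u z.2) *
            ((u z.1 ^ r - v z.1 ^ r) / u z.1 ^ (r - 1) -
             (u z.2 ^ r - v z.2 ^ r) / u z.2 ^ (r - 1)) +
          sgnPow q (v z.1 - v z.2) *
            ((v z.1 ^ r - u z.1 ^ r) / v z.1 ^ (r - 1) -
             (v z.2 ^ r - u z.2 ^ r) / v z.2 ^ (r - 1)) := by
  -- `Ω` need not be measurable, so it is the set where the inequality holds that must be.
  rw [Measure.prod_restrict, ae_restrict_iff (measurableSet_le measurable_const (by
    unfold sgnPow; fun_prop))]
  exact ae_of_all _ fun z ⟨hz1, hz2⟩ => discrete_picone_pointwise hr1 hrq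
    (hupos _ hz1) (hupos _ hz2) (hvpos _ hz1) (hvpos _ hz2)

/-- Discrete Picone-type inequality (Lemma `Lemma2` of the paper): for `1 < q < ∞`,
`1 < r ≤ q` and any two measurable positive functions `u, v` on `Ω`, for a.e. `x, y ∈ Ω`
one has
`[u(x)-u(y)]^{q-1} ((u(x)^r - v(x)^r)/u(x)^{r-1} - (u(y)^r - v(y)^r)/u(y)^{r-1})
 + [v(x)-v(y)]^{q-1} ((v(x)^r - u(x)^r)/v(x)^{r-1} - (v(y)^r - u(y)^r)/v(y)^{r-1}) ≥ 0`. -/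
theorem discrete_picone {α : Type*} [MeasurableSpace α] (μ : Measure α) [SigmaFinite μ]
    (Ω : Set α) (q r : ℝ) (hq : 1 < q) (hr1 : 1 < r) (hrq : r ≤ q)
    (u v : α → ℝ) (hu : Measurable u) (hv : Measurable v)
    (hupos : ∀ x ∈ Ω, 0 < u x) (hvpos : ∀ x ∈ Ω, 0 < v x) :
    ∀ᵐ z ∂((μ.restrict Ω).prod (μ.restrict Ω)),
      0 ≤ sgnPow q (u z.1 - u z.2) *
            ((u z.1 ^ r - v z.1 ^ r) / u z.1 ^ (r - 1) -
             (u z.2 ^ r - v z.2 ^ r) / u z.2 ^ (r - 1)) +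
          sgnPow q (v z.1 - v z.2) *
            ((v z.1 ^ r - u z.1 ^ r) / v z.1 ^ (r - 1) -
             (v z.2 ^ r - u z.2 ^ r) / v z.2 ^ (r - 1)) :=
  discrete_picone_general μ Ω q r hr1 hrq u v hu hv hupos hvpos
end
end

section
/- Let 1 < p < ∞ and let u, v be positive differentiable functions on Ω with v^p/u^{p-1} well-defined. Then the pointwise Picone inequality |∇u|^{p-2} ∇u · ∇(v^p / u^{p-1}) ≤ |∇v|^p holds; more generally for 1 < r ≤ p, |∇u|^{p-2} ∇u · ∇(v^r/u^{r-1}) ≤ |∇v|^r |∇u|^{p-r}. -/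
/-!
With `t = v/u`, the gradient of `v^r/u^(r-1)` is `r t^(r-1) ∇v - (r-1) t^r ∇u`. Pairing it with
`|∇u|^(p-2) ∇u`, bounding `⟪∇u, ∇v⟫ ≤ |∇u| |∇v|` and putting `s = t |∇u|` leaves
`|∇u|^(p-r) (r s^(r-1) |∇v| - (r-1) s^r)`, and `r s^(r-1) b - (r-1) s^r ≤ b^r` is Young's
inequality for the exponents `r` and `r/(r-1)`.
-/

open MeasureTheory
open scoped RealInnerProductSpace

noncomputable section

abbrev Euc (N : ℕ) := EuclideanSpace ℝ (Fin N)

theorem Real.mul_rpow_sub_one_mul_sub_le_rpow {r s b : ℝ} (hr : 1 < r) (hs : 0 ≤ s)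
    (hb : 0 ≤ b) : r * s ^ (r - 1) * b - (r - 1) * s ^ r ≤ b ^ r := by
  have hr1 : 0 < r - 1 := by linarith
  have hyoung := Real.young_inequality_of_nonneg hb (Real.rpow_nonneg hs (r - 1))
    (Real.HolderConjugate.conjExponent hr)
  rw [Real.conjExponent, ← Real.rpow_mul hs, mul_div_cancel₀ r hr1.ne', div_div_eq_mul_div,
    ← add_div, le_div_iff₀ (by linarith)] at hyoung
  linarith

theorem picone_scalar {p r a b t I : ℝ} (hr : 1 < r) (ha : 0 < a) (hb : 0 ≤ b) (ht : 0 ≤ t)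
    (hI : I ≤ a * b) :
    a ^ (p - 2) * (r * t ^ (r - 1) * I - (r - 1) * t ^ r * a ^ 2) ≤ b ^ r * a ^ (p - r) := by
  have hpow1 : a ^ (p - 2) * a = a ^ (p - r) * a ^ (r - 1) := by
    rw [← Real.rpow_add_one ha.ne', ← Real.rpow_add ha]; ring_nf
  have hpow2 : a ^ (p - 2) * a ^ 2 = a ^ (p - r) * a ^ r := by
    rw [← Real.rpow_natCast, ← Real.rpow_add ha, ← Real.rpow_add ha]; ring_nf
  calc a ^ (p - 2) * (r * t ^ (r - 1) * I - (r - 1) * t ^ r * a ^ 2)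
      ≤ a ^ (p - 2) * (r * t ^ (r - 1) * (a * b) - (r - 1) * t ^ r * a ^ 2) := by gcongr
    _ = a ^ (p - r) * (r * (t * a) ^ (r - 1) * b - (r - 1) * (t * a) ^ r) := by
      rw [Real.mul_rpow ht ha.le, Real.mul_rpow ht ha.le]
      linear_combination (r * t ^ (r - 1) * b) * hpow1 - ((r - 1) * t ^ r) * hpow2
    _ ≤ a ^ (p - r) * b ^ r := by
      gcongr
      exact Real.mul_rpow_sub_one_mul_sub_le_rpow hr (by positivity) hb
    _ = b ^ r * a ^ (p - r) := mul_comm _ _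

section

variable {E : Type*} [NormedAddCommGroup E] [InnerProductSpace ℝ E]

theorem inner_picone_le {p r t : ℝ} (hr : 1 < r) (ht : 0 ≤ t) (g h : E) :
    ⟪‖g‖ ^ (p - 2) • g, (r * t ^ (r - 1)) • h - ((r - 1) * t ^ r) • g⟫ ≤
      ‖h‖ ^ r * ‖g‖ ^ (p - r) := by
  rcases eq_or_ne g 0 with rfl | hg
  · simp only [smul_zero, inner_zero_left]
    positivity
  rw [real_inner_smul_left, inner_sub_right, real_inner_smul_right, real_inner_smul_right,
    real_inner_self_eq_norm_sq]
  exact picone_scalar hr (norm_pos_iff.2 hg) (norm_nonneg h) ht (real_inner_le_norm g h)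

variable [CompleteSpace E]

theorem HasGradientAt.rpow_div_rpow_sub_one {u v : E → ℝ} {gu gv x : E} {r : ℝ}
    (hu : HasGradientAt u gu x) (hv : HasGradientAt v gv x) (hux : 0 < u x) (hvx : 0 < v x) :
    HasGradientAt (fun z => v z ^ r / u z ^ (r - 1))
      ((r * (v x / u x) ^ (r - 1)) • gv - ((r - 1) * (v x / u x) ^ r) • gu) x := by
  have hnum := hv.hasFDerivAt.rpow_const (p := r) (Or.inl hvx.ne')
  have hden := (hasDerivAt_inv (Real.rpow_pos_of_pos hux (r - 1)).ne').comp_hasFDerivAt x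
    (hu.hasFDerivAt.rpow_const (p := r - 1) (Or.inl hux.ne'))
  have hquot := hnum.mul hden
  simp only [Function.comp_def] at hquot
  refine hquot.congr_fderiv ?_
  ext y
  have h1 : u x ^ (r - 1) = u x ^ (r - 2) * u x := by
    rw [← Real.rpow_add_one hux.ne']; ring_nf
  have h2 : u x ^ r = u x ^ (r - 2) * u x ^ 2 := by
    rw [← Real.rpow_natCast, ← Real.rpow_add hux]; ring_nf
  have h3 : v x ^ r = v x ^ (r - 1) * v x := by
    rw [← Real.rpow_add_one hvx.ne']; ring_nf
  simp only [add_apply, smul_apply,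
    InnerProductSpace.toDual_apply_apply, inner_sub_left, real_inner_smul_left, smul_eq_mul,
    Real.div_rpow hvx.le hux.le, show r - 1 - 1 = r - 2 by ring, h1, h2, h3]
  field_simp
  ring

end

theorem picone_inequality_general {N : ℕ} (Ω : Set (Euc N))
    (p : ℝ) (hp1 : 1 < p)
    (u v : Euc N → ℝ)
    (hu : ∀ x ∈ Ω, DifferentiableAt ℝ u x) (hv : ∀ x ∈ Ω, DifferentiableAt ℝ v x)
    (hupos : ∀ x ∈ Ω, 0 < u x) (hvpos : ∀ x ∈ Ω, 0 < v x) :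
    (∀ x ∈ Ω,
      ⟪(‖gradient u x‖ ^ (p - 2) : ℝ) • gradient u x,
        gradient (fun z => v z ^ p / u z ^ (p - 1)) x⟫ ≤ ‖gradient v x‖ ^ p) ∧
    (∀ r : ℝ, 1 < r → r ≤ p → ∀ x ∈ Ω,
      ⟪(‖gradient u x‖ ^ (p - 2) : ℝ) • gradient u x,
        gradient (fun z => v z ^ r / u z ^ (r - 1)) x⟫ ≤
          ‖gradient v x‖ ^ r * ‖gradient u x‖ ^ (p - r)) := by
  have picone : ∀ r : ℝ, 1 < r → ∀ x ∈ Ω,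
      ⟪(‖gradient u x‖ ^ (p - 2) : ℝ) • gradient u x,
        gradient (fun z => v z ^ r / u z ^ (r - 1)) x⟫ ≤
          ‖gradient v x‖ ^ r * ‖gradient u x‖ ^ (p - r) := by
    intro r hr x hx
    rw [((hu x hx).hasGradientAt.rpow_div_rpow_sub_one (hv x hx).hasGradientAt
      (hupos x hx) (hvpos x hx)).gradient]
    exact inner_picone_le hr (div_pos (hvpos x hx) (hupos x hx)).le _ _
  refine ⟨fun x hx => ?_, fun r hr _ => picone r hr⟩
  simpa using picone p hp1 x hx

/-- Generalized Picone inequality: for `1 < p < ∞` and positive differentiable `u, v` on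
an open set `Ω ⊆ ℝ^N`, pointwise `|∇u|^{p-2} ∇u · ∇(v^p/u^{p-1}) ≤ |∇v|^p`, and more
generally for `1 < r ≤ p`, `|∇u|^{p-2} ∇u · ∇(v^r/u^{r-1}) ≤ |∇v|^r |∇u|^{p-r}`. -/
theorem picone_inequality {N : ℕ} (Ω : Set (Euc N)) (hΩ : IsOpen Ω)
    (p : ℝ) (hp1 : 1 < p)
    (u v : Euc N → ℝ)
    (hu : ∀ x ∈ Ω, DifferentiableAt ℝ u x) (hv : ∀ x ∈ Ω, DifferentiableAt ℝ v x)
    (hupos : ∀ x ∈ Ω, 0 < u x) (hvpos : ∀ x ∈ Ω, 0 < v x) :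
    (∀ x ∈ Ω,
      ⟪(‖gradient u x‖ ^ (p - 2) : ℝ) • gradient u x,
        gradient (fun z => v z ^ p / u z ^ (p - 1)) x⟫ ≤ ‖gradient v x‖ ^ p) ∧
    (∀ r : ℝ, 1 < r → r ≤ p → ∀ x ∈ Ω,
      ⟪(‖gradient u x‖ ^ (p - 2) : ℝ) • gradient u x,
        gradient (fun z => v z ^ r / u z ^ (r - 1)) x⟫ ≤
          ‖gradient v x‖ ^ r * ‖gradient u x‖ ^ (p - r)) :=
  picone_inequality_general Ω p hp1 u v hu hv hupos hvpos
end
end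

section
/- For all real x, y: |x⁺ - y⁺|^q ≤ [x - y]^{q-1} (x⁺ - y⁺), where q > 1, t⁺ = max{t,0}, and [t]^{q-1} = |t|^{q-2} t. -/
noncomputable section

/-- Elementary inequality for the positive part: for `q > 1` and all real `x, y`,
`|x⁺ - y⁺|^q ≤ [x - y]^{q-1} (x⁺ - y⁺)` where `t⁺ = max (t, 0)`. -/
theorem posPart_inequality (q : ℝ) (hq : 1 < q) (x y : ℝ) :
    |max x 0 - max y 0| ^ q ≤ sgnPow q (x - y) * (max x 0 - max y 0) := by
  set a := max x 0 - max y 0 with ha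
  set d := x - y with hd
  have hle : |a| ≤ |d| := abs_max_sub_max_le_abs x y 0
  have hsign : 0 ≤ d * a := by
    rcases le_total x y with h | h
    · have h1 : d ≤ 0 := by simp [hd]; linarith
      have h2 : a ≤ 0 := sub_nonpos.2 (max_le_max h (le_refl (0:ℝ)))
      simpa using mul_nonneg (neg_nonneg.2 h1) (neg_nonneg.2 h2)
    · have h1 : 0 ≤ d := by simp [hd]; linarith
      have h2 : 0 ≤ a := sub_nonneg.2 (max_le_max h (le_refl (0:ℝ)))
      exact mul_nonneg h1 h2
  rcases eq_or_ne a 0 with ha0 | ha0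
  · simp [ha0, Real.zero_rpow (by positivity : q ≠ 0)]
  have hd0 : d ≠ 0 := fun h0 => ha0 (by
    have : |a| ≤ 0 := by simpa [h0] using hle
    simpa using le_antisymm this (abs_nonneg a))
  have hda : d * a = |d| * |a| := by
    rw [← abs_mul]; exact (abs_of_nonneg hsign).symm
  have key : sgnPow q d * a = |d| ^ (q - 1) * |a| := by
    rw [sgnPow, mul_assoc, hda, ← mul_assoc, ← Real.rpow_add_one (abs_ne_zero.2 hd0)]
    ring_nf
  rw [key]
  calc |a| ^ q = |a| ^ (q - 1) * |a| := by
        rw [← Real.rpow_add_one (abs_ne_zero.2 ha0) (q-1)]; ring_nf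
    _ ≤ |d| ^ (q - 1) * |a| :=
        mul_le_mul_of_nonneg_right
          (Real.rpow_le_rpow (abs_nonneg a) hle (by linarith)) (abs_nonneg a)
end
end

section
/- For all real x, y: -|x⁻ - y⁻|^q ≥ [x - y]^{q-1} (x⁻ - y⁻), where q > 1, t⁻ = max{-t, 0}, and [t]^{q-1} = |t|^{q-2}t. -/
noncomputable section

/-- Elementary inequality for the negative part: for `q > 1` and all real `x, y`,
`-|x⁻ - y⁻|^q ≥ [x - y]^{q-1} (x⁻ - y⁻)` where `t⁻ = max (-t, 0)`. -/
theorem negPart_inequality (q : ℝ) (hq : 1 < q) (x y : ℝ) :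
    sgnPow q (x - y) * (max (-x) 0 - max (-y) 0) ≤ -(|max (-x) 0 - max (-y) 0| ^ q) := by
  set a : ℝ := max (-x) 0 - max (-y) 0 with ha
  have h1 : |a| ≤ |x - y| := by
    have := abs_max_sub_max_le_abs (-x) (-y) 0
    rw [ha]
    calc |max (-x) 0 - max (-y) 0| ≤ |(-x) - (-y)| := this
      _ = |x - y| := by rw [abs_sub_comm]; ring_nf
  have h2 : (x - y) * a = -(|x - y| * |a|) := by
    rw [ha]
    rcases le_total 0 x with hx | hx <;> rcases le_total 0 y with hy | hy
    · rw [max_eq_right (neg_nonpos.mpr hx), max_eq_right (neg_nonpos.mpr hy)]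
      simp
    · rw [max_eq_right (neg_nonpos.mpr hx), max_eq_left (neg_nonneg.mpr hy),
        abs_of_nonneg (by linarith : (0:ℝ) ≤ x - y),
        abs_of_nonpos (by linarith : (0:ℝ) - -y ≤ 0)]
      ring
    · rw [max_eq_left (neg_nonneg.mpr hx), max_eq_right (neg_nonpos.mpr hy),
        abs_of_nonpos (by linarith : x - y ≤ 0),
        abs_of_nonneg (by linarith : (0:ℝ) ≤ -x - 0)]
      ring
    · rw [max_eq_left (neg_nonneg.mpr hx), max_eq_left (neg_nonneg.mpr hy)]
      rcases abs_cases (x - y) with ⟨e1, e2⟩ | ⟨e1, e2⟩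
      · rw [e1, abs_of_nonpos (by linarith : -x - -y ≤ 0)]; ring
      · rw [e1, abs_of_nonneg (by linarith : (0:ℝ) ≤ -x - -y)]; ring
  rcases eq_or_ne a 0 with h0 | h0
  · rw [h0]
    simp [Real.zero_rpow (by positivity : q ≠ 0)]
  · have hxy : x - y ≠ 0 := by
      intro h
      apply h0
      have : x = y := by linarith [sub_eq_zero.mp h]
      rw [ha, this]; ring
    have habs : (0:ℝ) < |x - y| := abs_pos.mpr hxy
    have habsa : (0:ℝ) < |a| := abs_pos.mpr h0
    rw [sgnPow]
    have key : |x - y| ^ (q - 2) * (x - y) * a = -(|x - y| ^ (q - 1) * |a|) := by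
      rw [mul_assoc, h2]
      have : |x - y| ^ (q - 1) = |x - y| ^ (q - 2) * |x - y| := by
        rw [← Real.rpow_add_one (ne_of_gt habs)]
        ring_nf
      rw [this]
      ring
    rw [key]
    have h3 : |a| ^ (q - 1) ≤ |x - y| ^ (q - 1) :=
      Real.rpow_le_rpow (abs_nonneg a) h1 (by linarith)
    have h4 : |a| ^ q = |a| ^ (q - 1) * |a| := by
      rw [← Real.rpow_add_one (ne_of_gt habsa)]
      ring_nf
    rw [h4]
    nlinarith
end
end
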